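/- The series ∑_{k=1}^∞ (1/(2k+1)²) · C(2k,k)/4^k equals (π/2)·ln(2) − 1. -/

import Mathlib

/-!
Since `∫₀¹ t^(2k) (-log t) dt = 1/(2k+1)²` and, by the binomial series,
`∑ₖ C(2k,k)/4^k · t^(2k) = 1/√(1-t²)`, summing under the integral (all terms are nonnegative)
gives `∑_{k≥0} C(2k,k)/4^k/(2k+1)² = ∫₀¹ -log t/√(1-t²) dt`. The substitution `t = sin θ`
turns this into `-∫₀^{π/2} log (sin θ) dθ = (π/2) log 2`; removing the term `k = 0`,
which is `1`, gives the claim.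
-/

open scoped BigOperators
open Real

noncomputable def cb (k : ℕ) : ℝ := (Nat.choose (2*k) k : ℝ) / 4^k

noncomputable def H (k : ℕ) : ℝ := ∑ j ∈ Finset.range k, (1:ℝ)/(j+1)

noncomputable def oh (k : ℕ) : ℝ := ∑ j ∈ Finset.range k, (1:ℝ)/(2*j+1)

open Set MeasureTheory intervalIntegral Polynomial

lemma cb_nonneg (k : ℕ) : 0 ≤ cb k := by
  unfold cb; positivity

lemma cb_le_one (k : ℕ) : cb k ≤ 1 := by
  unfold cb
  rw [div_le_one (by positivity)]
  exact_mod_cast Nat.centralBinom_le_four_pow k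

lemma cb_succ (k : ℕ) : cb (k + 1) = (k + 1 / 2) / (k + 1) * cb k := by
  have h : ((k : ℝ) + 1) * ((2 * (k + 1)).choose (k + 1) : ℕ)
      = 2 * (2 * k + 1) * ((2 * k).choose k : ℕ) := by
    exact_mod_cast Nat.succ_mul_centralBinom_succ k
  unfold cb
  rw [pow_succ]
  field_simp
  linear_combination 2 * h

lemma cb_eq_ringChoose (n : ℕ) : cb n = Ring.choose ((1 / 2 : ℝ) + n - 1) n := by
  rw [Ring.choose_eq_smul, descPochhammer_smeval_eq_ascPochhammer, ascPochhammer_smeval_cast,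
    ascPochhammer_smeval_eq_eval, smul_eq_mul, show (1 / 2 : ℝ) + n - 1 - n + 1 = 1 / 2 by ring]
  induction n with
  | zero => simp [cb]
  | succ n ih =>
    rw [cb_succ, ih, ascPochhammer_succ_eval, Nat.factorial_succ]
    push_cast
    field_simp
    ring

theorem hasSum_cb_mul_pow {x : ℝ} (hx : |x| < 1) :
    HasSum (fun n => cb n * x ^ n) (1 / √(1 - x)) := by
  have hx' : x ∈ Metric.eball (0 : ℝ) 1 := by
    simpa [enorm, ← NNReal.coe_lt_one] using hx
  simpa [FormalMultilinearSeries.ofScalars_apply_eq, cb_eq_ringChoose, sqrt_eq_rpow, mul_comm]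
    using (one_div_one_sub_rpow_hasFPowerSeriesOnBall_zero (1 / 2)).hasSum hx'

lemma intervalIntegrable_pow_mul_neg_log (n : ℕ) {a b : ℝ} :
    IntervalIntegrable (fun t => t ^ n * -log t) volume a b :=
  intervalIntegrable_log'.neg.continuousOn_mul (continuous_pow n).continuousOn

lemma integral_pow_mul_neg_log (n : ℕ) : ∫ t in 0..1, t ^ n * -log t = 1 / (n + 1) ^ 2 := by
  -- written through `t * log t` so that it is visibly continuous at `0`
  let F : ℝ → ℝ := fun t => t ^ (n + 1) / (n + 1) ^ 2 - t ^ n * (t * log t) / (n + 1)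
  have hF : ContinuousOn F (Icc 0 1) := by fun_prop
  have hF' : ∀ t ∈ Ioo (0 : ℝ) 1, HasDerivAt F (t ^ n * -log t) t := by
    intro t ht
    have := ((hasDerivAt_pow (n + 1) t).div_const ((n + 1) ^ 2)).sub
      (((hasDerivAt_pow (n + 1) t).mul (hasDerivAt_log ht.1.ne')).div_const (n + 1))
    refine (this.congr_deriv ?_).congr_of_eventuallyEq (.of_forall fun s => ?_)
    · rw [Nat.add_sub_cancel, pow_succ]
      field_simp [ht.1.ne']
      push_cast
      ring
    · simp only [F, Pi.sub_apply, Pi.mul_apply]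
      ring
  rw [integral_eq_sub_of_hasDerivAt_of_le zero_le_one hF hF' (intervalIntegrable_pow_mul_neg_log n)]
  simp [F]

lemma summable_cb_div_sq : Summable fun k : ℕ => cb k / (2 * k + 1) ^ 2 := by
  have h := (summable_nat_add_iff 1).2 (summable_one_div_nat_pow.2 one_lt_two)
  refine Summable.of_nonneg_of_le (fun k => div_nonneg (cb_nonneg k) (by positivity))
    (fun k => ?_) h
  push_cast
  calc cb k / (2 * k + 1) ^ 2 ≤ 1 / (2 * (k : ℝ) + 1) ^ 2 := by gcongr; exact cb_le_one k
    _ ≤ 1 / ((k : ℝ) + 1) ^ 2 := by gcongr; linarith [(k.cast_nonneg : (0 : ℝ) ≤ k)]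

theorem hasSum_cb_div_sq_integral :
    HasSum (fun k : ℕ => cb k / (2 * k + 1) ^ 2) (∫ t in 0..1, -log t / √(1 - t ^ 2)) := by
  let F : ℕ → ℝ → ℝ := fun k t => cb k * (t ^ (2 * k) * -log t)
  have hF_int (k : ℕ) : ∫ t in 0..1, F k t = cb k / (2 * k + 1) ^ 2 := by
    simp only [F, intervalIntegral.integral_const_mul, integral_pow_mul_neg_log]
    push_cast
    ring
  have hF_nonneg (k : ℕ) : ∀ t ∈ Ioo (0 : ℝ) 1, 0 ≤ F k t := fun t ht =>
    mul_nonneg (cb_nonneg k)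
      (mul_nonneg (pow_nonneg ht.1.le _) (neg_nonneg.2 (log_nonpos ht.1.le ht.2.le)))
  have hF_sum : ∀ t ∈ Ioo (0 : ℝ) 1, HasSum (F · t) (-log t / √(1 - t ^ 2)) := by
    intro t ht
    have ht2 : |t ^ 2| < 1 := by
      rw [abs_of_nonneg (by positivity)]; nlinarith [ht.1, ht.2]
    have := (hasSum_cb_mul_pow ht2).mul_right (-log t)
    rw [one_div_mul_eq_div] at this
    refine this.congr_fun fun k => ?_
    rw [← pow_mul]
    ring
  simp only [integral_of_le zero_le_one, integral_Ioc_eq_integral_Ioo] at hF_int ⊢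
  have hF_integrable (k : ℕ) : IntegrableOn (F k) (Ioo 0 1) :=
    (intervalIntegrable_iff_integrableOn_Ioo_of_le zero_le_one).1
      ((intervalIntegrable_pow_mul_neg_log (2 * k)).const_mul (cb k))
  have hF_norm : (fun k => ∫ t in Ioo 0 1, ‖F k t‖) = fun k : ℕ => cb k / (2 * k + 1) ^ 2 :=
    funext fun k => (hF_int k) ▸ setIntegral_congr_fun measurableSet_Ioo
      fun t ht => norm_of_nonneg (hF_nonneg k t ht)
  have := hasSum_integral_of_summable_integral_norm hF_integrable (hF_norm ▸ summable_cb_div_sq)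
  simp only [hF_int] at this
  rwa [setIntegral_congr_fun measurableSet_Ioo fun t ht => (hF_sum t ht).tsum_eq] at this

theorem integral_neg_log_div_sqrt_one_sub_sq :
    ∫ t in 0..1, -log t / √(1 - t ^ 2) = π / 2 * log 2 := by
  have hcos : ∀ θ ∈ Icc 0 (π / 2), 0 ≤ cos θ := fun θ hθ =>
    cos_nonneg_of_mem_Icc ⟨by linarith [hθ.1, pi_pos], hθ.2⟩
  have hsub := integral_comp_mul_deriv_of_deriv_nonneg (a := 0) (b := π / 2) (f' := cos)
    (g := fun t => -log t / √(1 - t ^ 2)) continuousOn_sin (fun θ _ => hasDerivAt_sin θ)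
    fun θ hθ => hcos θ <| Ioo_subset_Icc_self <| by
      rwa [min_eq_left pi_div_two_pos.le, max_eq_right pi_div_two_pos.le] at hθ
  rw [sin_zero, sin_pi_div_two] at hsub
  rw [← hsub, integral_congr (g := fun θ => -log (sin θ)) fun θ hθ => ?_,
    intervalIntegral.integral_neg, integral_log_sin_zero_pi_div_two]
  · ring
  rw [uIcc_of_le (by positivity)] at hθ
  simp only [Function.comp_apply]
  rw [← cos_sq', sqrt_sq (hcos θ hθ)]
  -- where `cos θ = 0` we have `sin θ = ± 1`, so both sides vanish
  refine div_mul_cancel_of_imp fun h0 => ?_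
  have : sin θ ^ 2 = 1 := by nlinarith [sin_sq_add_cos_sq θ]
  rw [neg_eq_zero, log_eq_zero]
  exact Or.inr (sq_eq_one_iff.1 this)

theorem hasSum_cb_div_sq : HasSum (fun k : ℕ => cb k / (2 * k + 1) ^ 2) (π / 2 * log 2) :=
  integral_neg_log_div_sqrt_one_sub_sq ▸ hasSum_cb_div_sq_integral

theorem stmt_8 : ∑' k : ℕ, (1/(2*((k:ℝ)+1)+1)^2) * cb (k+1)
    = (Real.pi/2) * Real.log 2 - 1 := by
  have h := (hasSum_nat_add_iff' 1).2 hasSum_cb_div_sq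
  refine (h.congr_fun fun k => ?_).tsum_eq.trans ?_
  · push_cast
    ring
  · simp [cb]
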